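/- arXiv:0903.1381 — 5 statements merged into one kernel-verified Lean document; each statement's English description precedes it below -/
import Mathlib

section
/- Let (Γ, Γ') be a pair of dual graded graphs on a common vertex set V with height function h, unique vertex v₀ of height 0, and edge-multiplicity functions m, m' : V × V → ℕ, with differential coefficient r ∈ ℕ (i.e. D_{Γ'}∘U_Γ − U_Γ∘D_{Γ'} = r·Id on the free ℤ-module ℤV). Then for every n ≥ 0, the sum over all vertices v of height n of f^v_Γ · f^v_{Γ'} equals rⁿ · n!, where f^v_Γ (resp. f^v_{Γ'}) denotes the number of paths from v₀ to v in Γ (resp. Γ') counted with edge multiplicities. -/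
/-!
Write `L k` for the finite set of vertices of height `k`. Expanding `f` on `L (k+1)` by its
recursion and applying the duality relation gives, for `u ∈ L k`,
`∑_{w ∈ L (k+1)} m' u w f w = ∑_{v ∈ L k} f v ∑_w m' w v m w u + r f u`,
and by induction on `k` the right side is `r (k + 1) f u`
(Fomin's `D' Uᵏ⁺¹ v₀ = r (k+1) Uᵏ v₀`).
Expanding `f'` on `L (n+1)` the same way then gives `∑_{L (n+1)} f f' = r (n + 1) ∑_{L n} f f'`.
-/

open Finset

theorem Finset.sum_mul_sum_transpose {ι κ R : Type*} [CommSemiring R] (s : Finset ι)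
    (t : Finset κ) (a : ι → κ → R) (x : ι → R) (y : κ → R) :
    ∑ j ∈ t, y j * ∑ i ∈ s, a i j * x i = ∑ i ∈ s, x i * ∑ j ∈ t, a i j * y j := by
  simp_rw [mul_sum]
  rw [sum_comm]
  exact sum_congr rfl fun _ _ => sum_congr rfl fun _ _ => by ring

section GradedGraph

variable {V : Type*} {h : V → ℕ} (hfib : ∀ n : ℕ, {v : V | h v = n}.Finite)

theorem finsum_eq_sum_level {M : Type*} [AddCommMonoid M] {F : V → M} {k : ℕ}
    (hF : ∀ w, F w ≠ 0 → h w = k) : ∑ᶠ w, F w = ∑ w ∈ (hfib k).toFinset, F w :=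
  finsum_eq_sum_of_support_subset F fun w hw => by simpa using hF w hw

theorem level_zero_eq_singleton {v₀ : V} (hv₀ : h v₀ = 0)
    (huniq : ∀ v, h v = 0 → v = v₀) : (hfib 0).toFinset = {v₀} := by
  ext v
  simp only [Set.Finite.mem_toFinset, Set.mem_ofPred_eq, mem_singleton]
  exact ⟨huniq v, fun hv => hv ▸ hv₀⟩

variable {m : V → V → ℕ}

theorem finsum_in_eq_sum_level (hm : ∀ v u, m v u ≠ 0 → h u = h v + 1) {k : ℕ} {u : V}
    (hu : h u = k + 1) (g : V → ℕ) :
    ∑ᶠ v, m v u * g v = ∑ v ∈ (hfib k).toFinset, m v u * g v :=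
  finsum_eq_sum_level hfib fun v hv => by
    have := hm v u (left_ne_zero_of_mul hv)
    omega

theorem finsum_out_eq_sum_level (hm : ∀ v u, m v u ≠ 0 → h u = h v + 1) {k : ℕ} {v : V}
    (hv : h v = k) (g : V → ℕ) :
    ∑ᶠ w, m v w * g w = ∑ w ∈ (hfib (k + 1)).toFinset, m v w * g w :=
  finsum_eq_sum_level hfib fun w hw => by
    have := hm v w (left_ne_zero_of_mul hw)
    omega

theorem finsum_in_eq_zero_of_height_zero (hm : ∀ v u, m v u ≠ 0 → h u = h v + 1) {u : V}
    (hu : h u = 0) (g : V → ℕ) : ∑ᶠ v, m v u * g v = 0 :=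
  finsum_eq_zero_of_forall_eq_zero fun v => by
    have : m v u = 0 := by
      by_contra hvu
      have := hm v u hvu
      omega
    rw [this, zero_mul]

theorem paths_eq_sum_level (hm : ∀ v u, m v u ≠ 0 → h u = h v + 1) {f : V → ℕ}
    (hf : ∀ u, 1 ≤ h u → f u = ∑ᶠ v, m v u * f v) {k : ℕ} {u : V} (hu : h u = k + 1) :
    f u = ∑ v ∈ (hfib k).toFinset, m v u * f v := by
  rw [hf u (by omega), finsum_in_eq_sum_level hfib hm hu]

variable [DecidableEq V] {m' : V → V → ℕ} {r : ℕ} {f : V → ℕ}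

theorem sum_down_mul_paths_eq_add (hm : ∀ v u, m v u ≠ 0 → h u = h v + 1)
    (hdual : ∀ u v : V, h u = h v →
      (∑ᶠ w : V, m v w * m' u w) = (∑ᶠ w : V, m' w v * m w u) + (if u = v then r else 0))
    (hf : ∀ u, 1 ≤ h u → f u = ∑ᶠ v, m v u * f v) {k : ℕ} {u : V} (hu : h u = k) :
    ∑ w ∈ (hfib (k + 1)).toFinset, m' u w * f w
      = ∑ v ∈ (hfib k).toFinset, f v * ∑ᶠ w, m' w v * m w u + r * f u := by
  have hu_mem : u ∈ (hfib k).toFinset := by simpa using hu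
  calc ∑ w ∈ (hfib (k + 1)).toFinset, m' u w * f w
      = ∑ w ∈ (hfib (k + 1)).toFinset, m' u w * ∑ v ∈ (hfib k).toFinset, m v w * f v :=
        sum_congr rfl fun w hw => by
          rw [paths_eq_sum_level hfib hm hf (by simpa using hw)]
    _ = ∑ v ∈ (hfib k).toFinset, f v * ∑ w ∈ (hfib (k + 1)).toFinset, m v w * m' u w :=
        sum_mul_sum_transpose _ _ _ _ _
    _ = ∑ v ∈ (hfib k).toFinset, f v * (∑ᶠ w, m' w v * m w u + if u = v then r else 0) :=
        sum_congr rfl fun v hv => by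
          have hv : h v = k := by simpa using hv
          rw [← finsum_out_eq_sum_level hfib hm hv, hdual u v (hu.trans hv.symm)]
    _ = ∑ v ∈ (hfib k).toFinset, f v * ∑ᶠ w, m' w v * m w u + r * f u := by
        simp_rw [mul_add, sum_add_distrib, mul_ite, mul_zero, sum_ite_eq, if_pos hu_mem,
          mul_comm]

theorem sum_down_mul_paths (hm : ∀ v u, m v u ≠ 0 → h u = h v + 1)
    (hm' : ∀ v u, m' v u ≠ 0 → h u = h v + 1)
    (hdual : ∀ u v : V, h u = h v →
      (∑ᶠ w : V, m v w * m' u w) = (∑ᶠ w : V, m' w v * m w u) + (if u = v then r else 0))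
    (hf : ∀ u, 1 ≤ h u → f u = ∑ᶠ v, m v u * f v) (k : ℕ) {u : V} (hu : h u = k) :
    ∑ w ∈ (hfib (k + 1)).toFinset, m' u w * f w = r * (k + 1) * f u := by
  induction k generalizing u with
  | zero =>
    rw [sum_down_mul_paths_eq_add hfib hm hdual hf hu]
    have hdown : ∀ v ∈ (hfib 0).toFinset, f v * ∑ᶠ w, m' w v * m w u = 0 := fun v hv => by
      rw [finsum_in_eq_zero_of_height_zero hm' (by simpa using hv), mul_zero]
    rw [sum_eq_zero hdown]
    ring
  | succ k ih =>
    rw [sum_down_mul_paths_eq_add hfib hm hdual hf hu]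
    have hdown : ∑ v ∈ (hfib (k + 1)).toFinset, f v * ∑ᶠ w, m' w v * m w u
        = r * (k + 1) * f u := by
      calc ∑ v ∈ (hfib (k + 1)).toFinset, f v * ∑ᶠ w, m' w v * m w u
          = ∑ v ∈ (hfib (k + 1)).toFinset, f v * ∑ w ∈ (hfib k).toFinset, m' w v * m w u :=
            sum_congr rfl fun v hv => by
              rw [finsum_in_eq_sum_level hfib hm' (by simpa using hv)]
        _ = ∑ w ∈ (hfib k).toFinset, m w u * (r * (k + 1) * f w) := by
            rw [← sum_mul_sum_transpose]
            exact sum_congr rfl fun w hw => by rw [ih (by simpa using hw)]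
        _ = r * (k + 1) * f u := by
            rw [paths_eq_sum_level hfib hm hf hu, mul_sum]
            exact sum_congr rfl fun w _ => by ring
    rw [hdown]
    ring

end GradedGraph

/-- Fomin's path-counting theorem for dual graded graphs: if `(Γ, Γ')` is a pair of
dual graded graphs with differential coefficient `r`, then the sum over vertices `v`
of height `n` of `f^v_Γ · f^v_{Γ'}` equals `rⁿ · n!`. -/
theorem stmt_0 {V : Type*} [DecidableEq V] (h : V → ℕ) (v₀ : V) (m m' : V → V → ℕ) (r : ℕ)
    -- each fiber of the height function is finite
    (hfib : ∀ n : ℕ, {v : V | h v = n}.Finite)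
    -- `v₀` is the unique vertex of height `0`
    (hv₀ : h v₀ = 0) (huniq : ∀ v : V, h v = 0 → v = v₀)
    -- edges go up exactly one level
    (hm : ∀ v u : V, m v u ≠ 0 → h u = h v + 1)
    (hm' : ∀ v u : V, m' v u ≠ 0 → h u = h v + 1)
    -- duality with differential coefficient `r`:
    -- `D_{Γ'} ∘ U_Γ - U_Γ ∘ D_{Γ'} = r · Id`, written entrywise
    (hdual : ∀ u v : V, h u = h v →
      (∑ᶠ w : V, m v w * m' u w) = (∑ᶠ w : V, m' w v * m w u) + (if u = v then r else 0))
    -- `f` and `f'` count paths from `v₀` in `Γ` and `Γ'` respectively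
    (f f' : V → ℕ)
    (hf₀ : f v₀ = 1) (hf : ∀ u : V, 1 ≤ h u → f u = ∑ᶠ v : V, m v u * f v)
    (hf'₀ : f' v₀ = 1) (hf' : ∀ u : V, 1 ≤ h u → f' u = ∑ᶠ v : V, m' v u * f' v)
    (n : ℕ) :
    ∑ v ∈ (hfib n).toFinset, f v * f' v = r ^ n * n.factorial := by
  induction n with
  | zero => simp [level_zero_eq_singleton hfib hv₀ huniq, hf₀, hf'₀]
  | succ n ih =>
    calc ∑ v ∈ (hfib (n + 1)).toFinset, f v * f' v
        = ∑ v ∈ (hfib (n + 1)).toFinset, f v * ∑ u ∈ (hfib n).toFinset, m' u v * f' u :=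
          sum_congr rfl fun v hv => by
            rw [paths_eq_sum_level hfib hm' hf' (by simpa using hv)]
      _ = ∑ u ∈ (hfib n).toFinset, f' u * (r * (n + 1) * f u) := by
          rw [sum_mul_sum_transpose]
          exact sum_congr rfl fun u hu => by
            rw [sum_down_mul_paths hfib hm hm' hdual hf n (by simpa using hu)]
      _ = r ^ (n + 1) * (n + 1).factorial := by
          rw [sum_congr rfl fun u _ => mul_left_comm (f' u) (r * (n + 1)) (f u), ← mul_sum,
            sum_congr rfl fun u _ => mul_comm (f' u) (f u), ih, Nat.factorial_succ]
          ring
end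

section
/- Let R be a commutative ring, let A and B be bialgebras over R, and let p : A × B → R be an R-bilinear pairing satisfying: p(1_A, z) = ε_B(z) and p(x, 1_B) = ε_A(x) for all x ∈ A, z ∈ B; p(x·y, z) = Σ p(x, z⁽¹⁾)·p(y, z⁽²⁾) for all x, y ∈ A, z ∈ B, where Δ_B(z) = Σ z⁽¹⁾ ⊗ z⁽²⁾; and p(x, z·w) = Σ p(x⁽¹⁾, z)·p(x⁽²⁾, w) for all x ∈ A, z, w ∈ B, where Δ_A(x) = Σ x⁽¹⁾ ⊗ x⁽²⁾. Let α ∈ A and β ∈ B be primitive elements, i.e. Δ_A(α) = 1⊗α + α⊗1 and Δ_B(β) = 1⊗β + β⊗1, and assume ε_A(α) = 0 and ε_B(β) = 0. Define R-linear operators on B by U(z) = β·z and D(z) = Σ p(α, z⁽¹⁾)·z⁽²⁾. Then D∘U − U∘D = p(α, β)·Id_B. -/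
/-!
Write `D_f z = Σ f(z⁽¹⁾) z⁽²⁾` for a functional `f` on `B`. Since `Δ` is multiplicative and `β`
is primitive, `Δ(β z) = Σ z⁽¹⁾ ⊗ β z⁽²⁾ + Σ β z⁽¹⁾ ⊗ z⁽²⁾`, so `D_f (β z) = β D_f z + D_{f(β ·)} z`.
For `f = p(α, ·)` with `α` primitive, the pairing axiom makes `p(α, ·)` an `ε`-derivation,
so `p(α, β y) = p(α, β) ε(y)`; and `D_ε = id` by the counit axiom.
-/

open TensorProduct

namespace Coalgebra

section Coalgebra

variable {R C : Type*} [CommSemiring R] [AddCommMonoid C] [Module R C] [Coalgebra R C]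

noncomputable def contractLeft (f : C →ₗ[R] R) : C →ₗ[R] C :=
  (TensorProduct.lid R C).toLinearMap ∘ₗ f.rTensor C ∘ₗ comul

theorem contractLeft_smul (c : R) (f : C →ₗ[R] R) :
    contractLeft (c • f) = c • contractLeft f := by
  ext z
  simp [contractLeft]

theorem contractLeft_counit : contractLeft (counit : C →ₗ[R] R) = LinearMap.id := by
  ext z
  simp [contractLeft]

end Coalgebra

section Bialgebra

variable {R B : Type*} [CommSemiring R] [Semiring B] [Bialgebra R B]

theorem contractLeft_mul_of_comul_eq {β : B} (hβ : comul β = 1 ⊗ₜ[R] β + β ⊗ₜ[R] 1)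
    (f : B →ₗ[R] R) (z : B) :
    contractLeft f (β * z) =
      β * contractLeft f z + contractLeft (f ∘ₗ LinearMap.mulLeft R β) z := by
  simp only [contractLeft, LinearMap.comp_apply, Bialgebra.comul_mul, hβ]
  induction comul (R := R) z using TensorProduct.induction_on with
  | zero => simp
  | tmul z₁ z₂ => simp [add_mul, Algebra.mul_smul_comm]
  | add c d hc hd =>
    simp only [mul_add, map_add, hc, hd]
    abel

end Bialgebra

end Coalgebra

open Coalgebra

theorem pairing_mul_of_comul_eq {R A B : Type*} [CommSemiring R]
    [Semiring A] [Bialgebra R A] [Semiring B] [Bialgebra R B] (p : A →ₗ[R] B →ₗ[R] R)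
    (hp1 : ∀ z : B, p 1 z = counit z)
    (hpcomul : ∀ (x : A) (z w : B),
      p x (z * w) = LinearMap.mul' R R (TensorProduct.map (p.flip z) (p.flip w) (comul x)))
    {α : A} (hα : comul α = 1 ⊗ₜ[R] α + α ⊗ₜ[R] 1) (y z : B) :
    p α (y * z) = counit y * p α z + p α y * counit z := by
  simp [hpcomul, hα, hp1]

theorem stmt_2_general {R : Type*} [CommRing R]
    {A : Type*} [Ring A] [Bialgebra R A]
    {B : Type*} [Ring B] [Bialgebra R B]
    (p : A →ₗ[R] B →ₗ[R] R)
    (hp1 : ∀ z : B, p 1 z = Coalgebra.counit z)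
    (hpcomul : ∀ (x : A) (z w : B),
      p x (z * w) = LinearMap.mul' R R (TensorProduct.map (p.flip z) (p.flip w) (Coalgebra.comul x)))
    (α : A) (β : B)
    (hα : Coalgebra.comul α = 1 ⊗ₜ[R] α + α ⊗ₜ[R] 1)
    (hβ : Coalgebra.comul β = 1 ⊗ₜ[R] β + β ⊗ₜ[R] 1)
    (hεβ : Coalgebra.counit β = (0 : R))
    (U D : B →ₗ[R] B)
    (hU : ∀ z : B, U z = β * z)
    (hD : D = (TensorProduct.lid R B).toLinearMap ∘ₗ
      (TensorProduct.map (p α) LinearMap.id) ∘ₗ Coalgebra.comul) :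
    D ∘ₗ U - U ∘ₗ D = p α β • (LinearMap.id : B →ₗ[R] B) := by
  have hD' : D = contractLeft (p α) := hD
  have hpβ : p α ∘ₗ LinearMap.mulLeft R β = p α β • counit := by
    ext z
    simp [pairing_mul_of_comul_eq p hp1 hpcomul hα, hεβ]
  have hDβ : ∀ z, contractLeft (p α) (β * z) = β * contractLeft (p α) z + p α β • z := by
    intro z
    rw [contractLeft_mul_of_comul_eq hβ, hpβ, contractLeft_smul, contractLeft_counit,
      LinearMap.smul_apply, LinearMap.id_apply]
  ext z
  simp [hU, hD', hDβ]

/-- Hivert–Nzeutchap / Lam–Shimozono, operator form: for dual bialgebras paired by a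
bialgebra pairing `p`, primitive elements `α`, `β` give operators `U(z) = β·z` and
`D(z) = Σ p(α,z⁽¹⁾)·z⁽²⁾` satisfying `D∘U − U∘D = p(α,β)·Id`. -/
theorem stmt_2 {R : Type*} [CommRing R]
    {A : Type*} [Ring A] [Bialgebra R A]
    {B : Type*} [Ring B] [Bialgebra R B]
    (p : A →ₗ[R] B →ₗ[R] R)
    (hp1 : ∀ z : B, p 1 z = Coalgebra.counit z)
    (hp1' : ∀ x : A, p x 1 = Coalgebra.counit x)
    (hpmul : ∀ (x y : A) (z : B),
      p (x * y) z = LinearMap.mul' R R (TensorProduct.map (p x) (p y) (Coalgebra.comul z)))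
    (hpcomul : ∀ (x : A) (z w : B),
      p x (z * w) = LinearMap.mul' R R (TensorProduct.map (p.flip z) (p.flip w) (Coalgebra.comul x)))
    (α : A) (β : B)
    (hα : Coalgebra.comul α = 1 ⊗ₜ[R] α + α ⊗ₜ[R] 1)
    (hβ : Coalgebra.comul β = 1 ⊗ₜ[R] β + β ⊗ₜ[R] 1)
    (hεα : Coalgebra.counit α = (0 : R)) (hεβ : Coalgebra.counit β = (0 : R))
    (U D : B →ₗ[R] B)
    (hU : ∀ z : B, U z = β * z)
    (hD : D = (TensorProduct.lid R B).toLinearMap ∘ₗ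
      (TensorProduct.map (p α) LinearMap.id) ∘ₗ Coalgebra.comul) :
    D ∘ₗ U - U ∘ₗ D = p α β • (LinearMap.id : B →ₗ[R] B) :=
  stmt_2_general p hp1 hpcomul α β hα hβ hεβ U D hU hD
end

section
/- Let H be a bialgebra over a commutative ring R, let β ∈ H satisfy Δ(β) = 1⊗β + β⊗1 and ε(β) = 0, and let φ : H → R be an R-linear map such that φ(x·y) = φ(x)·ε(y) + ε(x)·φ(y) for all x, y ∈ H. Define R-linear operators on H by U(x) = β·x and D = (φ ⊗ id)∘Δ : H → H. Then D∘U − U∘D = φ(β)·Id_H. -/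
/-!
Since `β` is primitive, `Δ(β x) = (1 ⊗ β + β ⊗ 1) Δx`. Applying `φ ⊗ id` to the first summand
gives `β · D x`; on the second, the `ε`-derivation rule and `ε β = 0` turn `φ (β x₍₁₎)` into
`φ β · ε x₍₁₎`, and the counit axiom collapses that summand to `φ β · x`.
-/

open TensorProduct LinearMap

section
variable {R A B : Type*} [CommSemiring R] [Semiring A] [Algebra R A] [Semiring B] [Algebra R B]

theorem TensorProduct.lid_map_one_tmul_mul (φ : A →ₗ[R] R) (b : B) (t : A ⊗[R] B) :
    TensorProduct.lid R B (map φ LinearMap.id ((1 ⊗ₜ b) * t)) =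
      b * TensorProduct.lid R B (map φ LinearMap.id t) := by
  induction t using TensorProduct.induction_on with
  | zero => simp
  | tmul a c => simp
  | add t s ht hs => simp only [mul_add, map_add, ht, hs]

theorem TensorProduct.map_tmul_one_mul (φ : A →ₗ[R] R) (a : A) (t : A ⊗[R] B) :
    map φ LinearMap.id ((a ⊗ₜ (1 : B)) * t) = map (φ ∘ₗ mulLeft R a) LinearMap.id t := by
  induction t using TensorProduct.induction_on with
  | zero => simp
  | tmul a c => simp
  | add t s ht hs => simp only [mul_add, map_add, ht, hs]

end

section
variable {R H : Type*} [CommSemiring R] [Semiring H] [Bialgebra R H]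

theorem lid_map_counit_comul (x : H) :
    TensorProduct.lid R H (map Coalgebra.counit LinearMap.id (Coalgebra.comul x)) = x := by
  rw [← rTensor_def]
  simp

theorem comp_mulLeft_eq_smul_counit {φ : H →ₗ[R] R}
    (hφ : ∀ x y : H, φ (x * y) = φ x * Coalgebra.counit y + Coalgebra.counit x * φ y)
    {β : H} (hεβ : Coalgebra.counit β = (0 : R)) :
    φ ∘ₗ mulLeft R β = φ β • Coalgebra.counit := by
  ext x
  simp [hφ, hεβ]

end

/-- If `β` is a primitive element of a bialgebra `H` and `φ : H → R` is an `ε`-derivation,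
then the operators `U(x) = β·x` and `D = (φ ⊗ id) ∘ Δ` satisfy `D∘U − U∘D = φ(β)·Id`. -/
theorem stmt_3 {R : Type*} [CommRing R] {H : Type*} [Ring H] [Bialgebra R H]
    (β : H)
    (hβ : Coalgebra.comul β = 1 ⊗ₜ[R] β + β ⊗ₜ[R] 1)
    (hεβ : Coalgebra.counit β = (0 : R))
    (φ : H →ₗ[R] R)
    (hφ : ∀ x y : H, φ (x * y) = φ x * Coalgebra.counit y + Coalgebra.counit x * φ y)
    (U D : H →ₗ[R] H)
    (hU : ∀ x : H, U x = β * x)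
    (hD : D = (TensorProduct.lid R H).toLinearMap ∘ₗ
      (TensorProduct.map φ LinearMap.id) ∘ₗ Coalgebra.comul) :
    D ∘ₗ U - U ∘ₗ D = φ β • (LinearMap.id : H →ₗ[R] H) := by
  ext x
  have hDU : D (U x) = U (D x) + φ β • x := by
    simp only [hD, hU, LinearMap.coe_comp, LinearEquiv.coe_coe, Function.comp_apply]
    rw [Bialgebra.comul_mul, hβ, add_mul, map_add, map_add, lid_map_one_tmul_mul,
      map_tmul_one_mul, comp_mulLeft_eq_smul_counit hφ hεβ, map_smul_left, LinearMap.smul_apply,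
      map_smul, lid_map_counit_comul]
  simp only [LinearMap.sub_apply, LinearMap.comp_apply, LinearMap.smul_apply, LinearMap.id_apply,
    hDU, add_sub_cancel_left]
end

section
/- Let R be a commutative ring, q, r ∈ R, M an R-module, and U, D : M → M R-linear maps such that D∘U − q·U∘D = r·Id_M. If x ∈ M satisfies D(x) = 0, then for every n ≥ 0 one has Dⁿ(Uⁿ(x)) = rⁿ · [n]!_q · x, where [n]!_q = ∏_{k=1}^{n} (1 + q + ⋯ + q^{k−1}) ∈ R. -/
/-!
The relation `D U = q U D + r` lets `D` move past one `U` at a time. Applied to `Uⁿ⁺¹ x`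
with `D x = 0`, each of the `n + 1` passages contributes a power of `q` times `r`, so
`D Uⁿ⁺¹ x = r [n+1]_q Uⁿ x`. Peeling off one `D U` pair at a time then yields
`Dⁿ Uⁿ x = rⁿ [n]!_q x`.
-/

open Finset

section QCommutation

variable {R : Type*} [CommRing R] {q r : R} {M : Type*} [AddCommGroup M] [Module R M]
  {U D : M →ₗ[R] M}

lemma apply_apply_of_comp_sub_smul_comp_eq
    (hcomm : D ∘ₗ U - q • (U ∘ₗ D) = r • (LinearMap.id : M →ₗ[R] M)) (y : M) :
    D (U y) = q • U (D y) + r • y := by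
  have h := LinearMap.congr_fun hcomm y
  simp only [LinearMap.sub_apply, LinearMap.comp_apply, LinearMap.smul_apply,
    LinearMap.id_apply] at h
  rw [← h, add_sub_cancel]

lemma apply_pow_succ_apply_of_comp_sub_smul_comp_eq
    (hcomm : D ∘ₗ U - q • (U ∘ₗ D) = r • (LinearMap.id : M →ₗ[R] M))
    {x : M} (hx : D x = 0) (n : ℕ) :
    D ((U ^ (n + 1)) x) = (r * ∑ i ∈ range (n + 1), q ^ i) • (U ^ n) x := by
  induction n with
  | zero => simp [apply_apply_of_comp_sub_smul_comp_eq hcomm, hx]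
  | succ n ih =>
    rw [pow_succ' U (n + 1), Module.End.mul_apply, apply_apply_of_comp_sub_smul_comp_eq hcomm,
      ih, map_smul, ← Module.End.mul_apply, ← pow_succ', smul_smul, ← add_smul,
      geom_sum_succ (n := n + 1)]
    congr 1
    ring

end QCommutation

/-- Quantized operator identity: if `D∘U − q·U∘D = r·Id` and `D x = 0`, then
`Dⁿ(Uⁿ(x)) = rⁿ · [n]!_q • x` where `[n]!_q` is the `q`-factorial in `R`. -/
theorem stmt_6 {R : Type*} [CommRing R] (q r : R)
    {M : Type*} [AddCommGroup M] [Module R M]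
    (U D : M →ₗ[R] M)
    (hcomm : D ∘ₗ U - q • (U ∘ₗ D) = r • (LinearMap.id : M →ₗ[R] M))
    (x : M) (hx : D x = 0) (n : ℕ) :
    (D ^ n) ((U ^ n) x) =
      (r ^ n * ∏ k ∈ Finset.range n, (∑ i ∈ Finset.range (k + 1), q ^ i)) • x := by
  induction n with
  | zero => simp
  | succ n ih =>
    rw [pow_succ D, Module.End.mul_apply,
      apply_pow_succ_apply_of_comp_sub_smul_comp_eq hcomm hx, map_smul, ih, smul_smul,
      prod_range_succ]
    congr 1
    ring
end

section
/- Let V be the set of compositions (finite sequences of positive integers, including the empty sequence), with height h(I) = i₁ + ⋯ + i_r for I = (i₁,…,i_r). Define multiplicity functions with values in ℕ[q] as follows. For Γ': m'(I, J) = 1 if J = (1, i₁, …, i_r) or (r ≥ 1 and J = (i₁+1, i₂, …, i_r)), and m'(I,J) = 0 otherwise. For Γ: for I = (i₁,…,i_r) with r ≥ 1 and each 1 ≤ j ≤ r, m(I, (i₁,…,i_{j−1}, i_j+1, i_{j+1},…,i_r)) = q^{i₁+⋯+i_{j−1}} and, for each 0 ≤ k ≤ i_j − 1, m(I, (i₁,…,i_{j−1},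 k+1, i_j−k, i_{j+1},…,i_r)) = q^{i₁+⋯+i_{j−1}+k+1}; additionally m(∅, (1)) = 1; all other multiplicities are 0. Then on the free ℤ[q]-module on V, the operators U_Γ(I) = Σ_J m(I,J)·J and D_{Γ'}(I) = Σ_J m'(J,I)·J satisfy D_{Γ'}∘U_Γ − q·U_Γ∘D_{Γ'} = Id, i.e. (Γ, Γ') is a pair of quantized dual graded graphs with differential coefficient 1. -/
open Polynomial

/-- Edge multiplicities (in `ℕ[q] ⊆ ℤ[q]`) of the graph `Γ` on compositions
(the `q`-weighted BinWord graph, arising from multiplication by `F₍₁₎` in the quantum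
quasi-symmetric functions).  For `I = (i₁,…,i_r)`, the edge from `I` to
`(i₁,…,i_{j−1}, i_j+1, i_{j+1},…,i_r)` has multiplicity `q^{i₁+⋯+i_{j−1}}`, the edge
from `I` to `(i₁,…,i_{j−1}, k+1, i_j−k, i_{j+1},…,i_r)` has multiplicity
`q^{i₁+⋯+i_{j−1}+k+1}` (for `0 ≤ k ≤ i_j−1`; when the two descriptions produce the same
composition, i.e. when `k = i_j − 1` and `j < r`, the edge is the one described with the
larger `j`), and `m(∅,(1)) = 1`; all other multiplicities are `0`.  This is encoded
recursively on the first part. -/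
noncomputable def mGamma : List ℕ+ → List ℕ+ → Polynomial ℤ
  | [], J => if J = [1] then 1 else 0
  | i :: T, J =>
      (if J = (i + 1) :: T then 1 else 0) +
      (∑ p ∈ Finset.Ico (1 : ℕ+) i,
        if J = p :: (i + 1 - p) :: T then (Polynomial.X : Polynomial ℤ) ^ (p : ℕ) else 0) +
      (match J with
        | [] => 0
        | j :: J' =>
            if j = i then (Polynomial.X : Polynomial ℤ) ^ (i : ℕ) * mGamma T J' else 0)

/-- Edge multiplicities of the lifted binary tree `Γ'` on compositions: the edges from
`I = (i₁,…,i_r)` go to `(1, i₁, …, i_r)` and (if `r ≥ 1`) to `(i₁+1, i₂, …, i_r)`, each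
with multiplicity `1`. -/
noncomputable def mGamma' : List ℕ+ → List ℕ+ → Polynomial ℤ :=
  fun I J =>
    (if J = 1 :: I then 1 else 0) +
    (match I with
      | [] => 0
      | i :: T => if J = (i + 1) :: T then 1 else 0)

/-!
Every nonempty composition `I` has exactly one parent in the lifted binary tree `Γ'` (drop a
leading `1`, or lower the first part by one), so the `K`-coefficient of `U_Γ D_{Γ'} I` is
`m(parent I, K)`, while that of `D_{Γ'} U_Γ I` is `m(I, 1·K) + m(I, K⁺)`, with `K⁺` raising the
first part of `K`. Unfolding `m` along the first part: if `I = 1·T`, then `m(I, 1·K) = q m(T, K)`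
and `m(I, K⁺) = [K = I]`. Otherwise, raising the first parts of both arguments multiplies every
edge weight by `q`, except that of the edge `parent I → I`, which stays `1`; the missing `q` is
`m(I, 1·I)`, and what is left over is the identity term.
-/

lemma PNat.add_one_sub_add_one (a b : ℕ+) : a + 1 - (b + 1) = a - b := by
  apply PNat.eq
  simp only [PNat.sub_coe, PNat.add_coe, PNat.val_ofNat, add_lt_add_iff_right]
  split_ifs <;> omega

@[simp]
lemma PNat.add_one_ne_one (k : ℕ+) : k + 1 ≠ 1 := (PNat.lt_add_left 1 k).ne'

@[simp]
lemma PNat.one_ne_add_one (k : ℕ+) : 1 ≠ k + 1 := (PNat.add_one_ne_one k).symm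

lemma mGamma_cons_nil (i : ℕ+) (T : List ℕ+) : mGamma (i :: T) [] = 0 := by
  simp [mGamma]

lemma mGamma_cons_cons (i k : ℕ+) (T K : List ℕ+) :
    mGamma (i :: T) (k :: K) =
      (if k = i + 1 ∧ K = T then 1 else 0) +
      (if k < i ∧ K = (i + 1 - k) :: T then X ^ (k : ℕ) else 0) +
      (if k = i then X ^ (i : ℕ) * mGamma T K else 0) := by
  simp only [mGamma, List.cons.injEq, ite_and, Finset.sum_ite_eq, Finset.mem_Ico, one_le, true_and]

lemma mGamma_one_cons_one_cons (T K : List ℕ+) : mGamma (1 :: T) (1 :: K) = X * mGamma T K := by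
  simp [mGamma_cons_cons]

lemma mGamma_one_cons_succ_cons (T : List ℕ+) (k : ℕ+) (K : List ℕ+) :
    mGamma (1 :: T) ((k + 1) :: K) = if k :: K = 1 :: T then 1 else 0 := by
  simp [mGamma_cons_cons]

lemma mGamma_succ_cons_one_cons (j : ℕ+) (T K : List ℕ+) :
    mGamma ((j + 1) :: T) (1 :: K) = if K = (j + 1) :: T then X else 0 := by
  simp [mGamma_cons_cons, PNat.add_sub]

lemma mGamma_succ_cons_succ_cons (j : ℕ+) (T : List ℕ+) (k : ℕ+) (K : List ℕ+) :
    mGamma ((j + 1) :: T) ((k + 1) :: K) =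
      (if k :: K = (j + 1) :: T then 1 - X else 0) + X * mGamma (j :: T) (k :: K) := by
  simp only [mGamma_cons_cons, List.cons.injEq, add_left_inj, add_lt_add_iff_right,
    PNat.add_one_sub_add_one, PNat.add_coe, PNat.val_ofNat]
  split_ifs <;> grind

lemma mGamma'_nil_right (J : List ℕ+) : mGamma' J [] = 0 := by
  cases J <;> simp [mGamma']

lemma mGamma'_one_cons_right (J T : List ℕ+) : mGamma' J (1 :: T) = if J = T then 1 else 0 := by
  cases J <;> simp [mGamma', eq_comm]

lemma mGamma'_succ_cons_right (J : List ℕ+) (j : ℕ+) (T : List ℕ+) :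
    mGamma' J ((j + 1) :: T) = if J = j :: T then 1 else 0 := by
  cases J <;> simp [mGamma', eq_comm]

lemma finsum_ite_eq_self {α M : Type*} [AddCommMonoid M] [DecidableEq α] (f : α → M) (a : α) :
    ∑ᶠ x, (if x = a then f x else 0) = f a := by
  rw [finsum_eq_single _ a fun x hx => if_neg hx, if_pos rfl]

lemma finsum_mGamma'_nil_mul (K : List ℕ+) : ∑ᶠ J, mGamma' J [] * mGamma J K = 0 := by
  simp [mGamma'_nil_right]

lemma finsum_mGamma'_one_cons_mul (T K : List ℕ+) :
    ∑ᶠ J, mGamma' J (1 :: T) * mGamma J K = mGamma T K := by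
  simp [mGamma'_one_cons_right, finsum_ite_eq_self]

lemma finsum_mGamma'_succ_cons_mul (j : ℕ+) (T K : List ℕ+) :
    ∑ᶠ J, mGamma' J ((j + 1) :: T) * mGamma J K = mGamma (j :: T) K := by
  simp [mGamma'_succ_cons_right, finsum_ite_eq_self]

lemma finsum_mul_mGamma'_nil (I : List ℕ+) :
    ∑ᶠ J, mGamma I J * mGamma' [] J = mGamma I [1] := by
  simp [mGamma', finsum_ite_eq_self]

lemma finsum_mul_mGamma'_cons (I : List ℕ+) (k : ℕ+) (K : List ℕ+) :
    ∑ᶠ J, mGamma I J * mGamma' (k :: K) J =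
      mGamma I (1 :: k :: K) + mGamma I ((k + 1) :: K) := by
  have hne : (1 :: k :: K : List ℕ+) ≠ (k + 1) :: K := by simp
  rw [finsum_eq_finsetSum_of_support_subset _ (s := {1 :: k :: K, (k + 1) :: K}),
    Finset.sum_pair hne]
  · simp [mGamma', hne, hne.symm]
  · intro J hJ
    contrapose! hJ
    simp_all [mGamma']

/-- `(Γ, Γ')` is a pair of quantized dual graded graphs with differential coefficient
`1`:  on the free `ℤ[q]`-module on the set of compositions, the up operator `U_Γ` of `Γ`
and the down operator `D_{Γ'}` of `Γ'` satisfy `D_{Γ'}∘U_Γ − q·U_Γ∘D_{Γ'} = Id`, written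
here entrywise: for all compositions `I, K`, the coefficient of `K` in
`(D_{Γ'}∘U_Γ)(I)` minus `q` times the coefficient of `K` in `(U_Γ∘D_{Γ'})(I)` is `1` if
`K = I` and `0` otherwise. -/
theorem stmt_13 (I K : List ℕ+) :
    (∑ᶠ J : List ℕ+, mGamma I J * mGamma' K J) -
      Polynomial.X * (∑ᶠ J : List ℕ+, mGamma' J I * mGamma J K) =
      (if K = I then 1 else 0) := by
  rcases I with _ | ⟨i, T⟩
  · rw [finsum_mGamma'_nil_mul]
    rcases K with _ | ⟨k, K⟩
    · rw [finsum_mul_mGamma'_nil]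
      simp [mGamma]
    · rw [finsum_mul_mGamma'_cons]
      simp [mGamma]
  obtain rfl | ⟨j, rfl⟩ := eq_or_ne i 1 |>.imp_right PNat.exists_eq_succ_of_ne_one
  · rw [finsum_mGamma'_one_cons_mul]
    rcases K with _ | ⟨k, K⟩
    · simp [finsum_mul_mGamma'_nil, mGamma_one_cons_one_cons]
    · rw [finsum_mul_mGamma'_cons, mGamma_one_cons_one_cons, mGamma_one_cons_succ_cons]
      ring
  · rw [finsum_mGamma'_succ_cons_mul]
    rcases K with _ | ⟨k, K⟩
    · simp [finsum_mul_mGamma'_nil, mGamma_succ_cons_one_cons, mGamma_cons_nil]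
    · rw [finsum_mul_mGamma'_cons, mGamma_succ_cons_one_cons, mGamma_succ_cons_succ_cons]
      split_ifs <;> ring
end
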